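/- For jointly Gaussian random variables X, Y, each standard normal (mean 0, variance 1), with correlation E[XY] = ρ where |ρ| ≤ 1, one has E[sign(X)·sign(Y)] = (2/π)·arcsin(ρ). -/

import Mathlib

open MeasureTheory ProbabilityTheory Real Set Filter

private lemma measurable_sign' : Measurable Real.sign := by
  have h : Real.sign = fun r : ℝ => if r < 0 then (-1:ℝ) else if 0 < r then 1 else 0 := rfl
  rw [h]
  exact Measurable.ite measurableSet_Iio measurable_const
    (Measurable.ite measurableSet_Ioi measurable_const measurable_const)

private lemma sign_smul_pos {s : ℝ} (hs : 0 < s) (u : ℝ) :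
    Real.sign (s * u) = Real.sign u := by
  rcases lt_trichotomy u 0 with h|h|h
  · rw [Real.sign_of_neg h, Real.sign_of_neg (mul_neg_of_pos_of_neg hs h)]
  · simp [h]
  · rw [Real.sign_of_pos h, Real.sign_of_pos (mul_pos hs h)]

private lemma sign_mul_self' (x : ℝ) : Real.sign x * x = |x| := by
  rcases lt_trichotomy x 0 with h|h|h
  · rw [Real.sign_of_neg h, abs_of_neg h]; ring
  · simp [h]
  · rw [Real.sign_of_pos h, abs_of_pos h]; ring

private lemma abs_sign_le (x : ℝ) : |Real.sign x| ≤ 1 := by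
  rcases Real.sign_apply_eq x with h|h|h <;> rw [h] <;> norm_num

private lemma pdf_eq (x : ℝ) :
    gaussianPDFReal 0 1 x = (Real.sqrt (2*π))⁻¹ * Real.exp (-(x^2)/2) := by
  simp [gaussianPDFReal]

private lemma pdf_even (x : ℝ) : gaussianPDFReal 0 1 (-x) = gaussianPDFReal 0 1 x := by
  rw [pdf_eq, pdf_eq, neg_sq]

private lemma pdf_cont : Continuous (gaussianPDFReal 0 1) := by
  have : (gaussianPDFReal 0 1) = fun x => (Real.sqrt (2*π))⁻¹ * Real.exp (-(x^2)/2) := by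
    funext x; exact pdf_eq x
  rw [this]; fun_prop

private lemma pdf_le (x : ℝ) : gaussianPDFReal 0 1 x ≤ (Real.sqrt (2*π))⁻¹ := by
  rw [pdf_eq]
  have h1 : Real.exp (-(x^2)/2) ≤ 1 := by
    rw [Real.exp_le_one_iff]; nlinarith [sq_nonneg x]
  have h2 : (0:ℝ) ≤ (Real.sqrt (2*π))⁻¹ := by positivity
  nlinarith

private lemma integral_x_exp {b : ℝ} (hb : 0 < b) :
    ∫ x in Ioi (0:ℝ), x * Real.exp (-b * x ^ 2) = (2 * b)⁻¹ := by
  have hderiv : ∀ x ∈ Ici (0:ℝ),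
      HasDerivAt (fun x : ℝ => -(2*b)⁻¹ * Real.exp (-b * x^2)) (x * Real.exp (-b * x^2)) x := by
    intro x _
    have h1 : HasDerivAt (fun x : ℝ => -b * x^2) (-b * (2*x)) x := by
      simpa using (hasDerivAt_pow 2 x).const_mul (-b)
    have h2 := (h1.exp).const_mul (-(2*b)⁻¹)
    refine h2.congr_deriv ?_
    have hb0 : b ≠ 0 := hb.ne'
    field_simp
  have hint : IntegrableOn (fun x : ℝ => x * Real.exp (-b * x^2)) (Ioi 0) :=
    (integrable_mul_exp_neg_mul_sq hb).integrableOn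
  have htend : Tendsto (fun x : ℝ => -(2*b)⁻¹ * Real.exp (-b * x^2)) atTop (nhds 0) := by
    have h1 : Tendsto (fun x : ℝ => x^2) atTop atTop := tendsto_pow_atTop (by norm_num)
    have h2 : Tendsto (fun x : ℝ => -b * x^2) atTop atBot := by
      exact Tendsto.const_mul_atTop_of_neg (by linarith) h1
    have h3 : Tendsto (fun x : ℝ => Real.exp (-b * x^2)) atTop (nhds 0) :=
      Real.tendsto_exp_atBot.comp h2
    simpa using h3.const_mul (-(2*b)⁻¹)
  have h := integral_Ioi_of_hasDerivAt_of_tendsto' hderiv hint htend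
  rw [h]; simp

private lemma integral_abs_exp {b : ℝ} (hb : 0 < b) :
    ∫ x : ℝ, |x| * Real.exp (-b * x ^ 2) = b⁻¹ := by
  have h := integral_comp_abs (f := fun t => t * Real.exp (-b * t^2))
  have h2 : ∀ x : ℝ, |x| * Real.exp (-b * |x| ^ 2) = |x| * Real.exp (-b * x ^ 2) := by
    intro x; rw [sq_abs]
  simp_rw [h2] at h
  rw [h, integral_x_exp hb]
  rw [mul_inv]
  ring

private lemma gauss_withDensity :
    gaussianReal 0 1 = volume.withDensity
      (fun x => ((Real.toNNReal (gaussianPDFReal 0 1 x) : NNReal) : ENNReal)) := by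
  rw [gaussianReal_of_var_ne_zero 0 one_ne_zero]
  rfl

private lemma measurable_nnpdf :
    Measurable (fun x => Real.toNNReal (gaussianPDFReal 0 1 x)) :=
  measurable_real_toNNReal.comp (measurable_gaussianPDFReal 0 1)

private lemma integral_gauss_eq (g : ℝ → ℝ) :
    ∫ x, g x ∂(gaussianReal 0 1) = ∫ x, gaussianPDFReal 0 1 x * g x := by
  rw [gauss_withDensity, integral_withDensity_eq_integral_smul measurable_nnpdf]
  congr 1
  funext x
  simp [NNReal.smul_def, Real.coe_toNNReal _ (gaussianPDFReal_nonneg 0 1 x)]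

private lemma integrable_gauss_iff (g : ℝ → ℝ) :
    Integrable g (gaussianReal 0 1) ↔ Integrable (fun x => gaussianPDFReal 0 1 x * g x) := by
  rw [gauss_withDensity, integrable_withDensity_iff_integrable_smul measurable_nnpdf]
  constructor <;> intro h
  all_goals
    apply h.congr
    filter_upwards with x
    simp [NNReal.smul_def, Real.coe_toNNReal _ (gaussianPDFReal_nonneg 0 1 x)]

private lemma integrable_abs_gauss : Integrable (fun x => |x|) (gaussianReal 0 1) := by
  rw [integrable_gauss_iff]
  have h1 : Integrable (fun x : ℝ => x * Real.exp (-(1/2) * x ^ 2)) :=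
    integrable_mul_exp_neg_mul_sq (by norm_num)
  have h2 := (h1.abs.const_mul (Real.sqrt (2*π))⁻¹)
  apply h2.congr
  filter_upwards with x
  rw [abs_mul, abs_of_pos (Real.exp_pos _), pdf_eq]
  ring_nf

private lemma integrable_bdd_gauss {g : ℝ → ℝ} (hg : Measurable g)
    (hb : ∀ x, |g x| ≤ 1) : Integrable g (gaussianReal 0 1) := by
  apply Integrable.mono' (integrable_const (1:ℝ)) hg.aestronglyMeasurable
  filter_upwards with x
  exact hb x

noncomputable def gcdf (t : ℝ) : ℝ := ∫ x in Iic t, gaussianPDFReal 0 1 x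

private lemma gcdf_nonneg (t : ℝ) : 0 ≤ gcdf t :=
  setIntegral_nonneg measurableSet_Iic (fun x _ => gaussianPDFReal_nonneg 0 1 x)

private lemma gcdf_le_one (t : ℝ) : gcdf t ≤ 1 := by
  rw [gcdf, ← integral_gaussianPDFReal_eq_one 0 one_ne_zero]
  exact setIntegral_le_integral (integrable_gaussianPDFReal 0 1)
    (Filter.Eventually.of_forall (fun x => gaussianPDFReal_nonneg 0 1 x))

private lemma gcdf_hasDeriv (t : ℝ) : HasDerivAt gcdf (gaussianPDFReal 0 1 t) t := by
  have hrepr : gcdf = fun u => gcdf 0 + ∫ x in (0:ℝ)..u, gaussianPDFReal 0 1 x := by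
    funext u
    rw [← intervalIntegral.integral_Iic_sub_Iic
      ((integrable_gaussianPDFReal 0 1).integrableOn)
      ((integrable_gaussianPDFReal 0 1).integrableOn)]
    rw [gcdf, gcdf]; ring
  rw [hrepr]
  have h := intervalIntegral.integral_hasDerivAt_right (a := 0) (b := t)
    ((integrable_gaussianPDFReal 0 1).intervalIntegrable)
    (pdf_cont.stronglyMeasurable.stronglyMeasurableAtFilter (l := nhds t))
    pdf_cont.continuousAt
  exact h.const_add (gcdf 0)

private lemma gcdf_cont : Continuous gcdf := by
  have : Differentiable ℝ gcdf := fun t => (gcdf_hasDeriv t).differentiableAt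
  exact this.continuous

private lemma gauss_Iio (a : ℝ) : ((gaussianReal 0 1) (Iio a)).toReal = gcdf a := by
  rw [gaussianReal_apply_eq_integral 0 one_ne_zero]
  rw [ENNReal.toReal_ofReal (setIntegral_nonneg measurableSet_Iio
    (fun x _ => gaussianPDFReal_nonneg 0 1 x))]
  rw [gcdf]
  exact setIntegral_congr_set Iio_ae_eq_Iic

private lemma gauss_Ioi (a : ℝ) : ((gaussianReal 0 1) (Ioi a)).toReal = 1 - gcdf a := by
  rw [gaussianReal_apply_eq_integral 0 one_ne_zero]
  rw [ENNReal.toReal_ofReal (setIntegral_nonneg measurableSet_Ioi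
    (fun x _ => gaussianPDFReal_nonneg 0 1 x))]
  have hcompl := integral_add_compl (s := Iic a) (μ := volume) measurableSet_Iic
    (integrable_gaussianPDFReal 0 1)
  rw [compl_Iic] at hcompl
  rw [integral_gaussianPDFReal_eq_one 0 one_ne_zero] at hcompl
  rw [gcdf]
  linarith

private lemma inner_sign (t : ℝ) :
    ∫ y, Real.sign (t + y) ∂(gaussianReal 0 1) = 1 - 2 * gcdf (-t) := by
  have hpt : ∀ y : ℝ, Real.sign (t + y) =
      (Ioi (-t)).indicator (fun _ => (1:ℝ)) y - (Iio (-t)).indicator (fun _ => (1:ℝ)) y := by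
    intro y
    rcases lt_trichotomy y (-t) with h|h|h
    · rw [Real.sign_of_neg (by linarith)]
      rw [indicator_of_notMem (by simpa using not_lt.mpr h.le), indicator_of_mem (by simpa using h)]
      norm_num
    · subst h; simp
    · rw [Real.sign_of_pos (by linarith)]
      rw [indicator_of_mem (by simpa using h), indicator_of_notMem (by simpa using not_lt.mpr h.le)]
      norm_num
  simp_rw [hpt]
  rw [integral_sub ((integrable_const (1:ℝ)).indicator measurableSet_Ioi)
    ((integrable_const (1:ℝ)).indicator measurableSet_Iio)]
  rw [integral_indicator_const _ measurableSet_Ioi, integral_indicator_const _ measurableSet_Iio]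
  rw [smul_eq_mul, smul_eq_mul, mul_one, mul_one, measureReal_def, measureReal_def, gauss_Ioi, gauss_Iio]
  ring

private lemma integral_sign_gauss : ∫ x, Real.sign x ∂(gaussianReal 0 1) = 0 := by
  have h := integral_neg_eq_self (fun x => gaussianPDFReal 0 1 x * Real.sign x) volume
  simp_rw [pdf_even, Real.sign_neg] at h
  rw [integral_gauss_eq]
  have h2 : ∫ x, gaussianPDFReal 0 1 x * -Real.sign x =
      -∫ x, gaussianPDFReal 0 1 x * Real.sign x := by
    rw [← integral_neg]; congr 1; funext x; ring
  rw [h2] at h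
  linarith

private lemma Fc_integrable (c : ℝ) :
    Integrable (fun x => Real.sign x * gcdf (-(c * x))) (gaussianReal 0 1) := by
  apply integrable_bdd_gauss
  · exact measurable_sign'.mul (gcdf_cont.measurable.comp ((measurable_const.mul measurable_id).neg))
  · intro x
    rw [abs_mul]
    have h1 := abs_sign_le x
    have h2 : |gcdf (-(c*x))| ≤ 1 :=
      abs_le.mpr ⟨by linarith [gcdf_nonneg (-(c*x))], gcdf_le_one _⟩
    exact mul_le_one₀ h1 (abs_nonneg _) h2

private lemma Kderiv_integral (c : ℝ) :
    ∫ x, Real.sign x * (gaussianPDFReal 0 1 (-(c*x)) * -x) ∂(gaussianReal 0 1)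
      = -((1/π) * (1 + c^2)⁻¹) := by
  rw [integral_gauss_eq]
  have hpt : ∀ x : ℝ,
      gaussianPDFReal 0 1 x * (Real.sign x * (gaussianPDFReal 0 1 (-(c*x)) * -x))
      = -((2*π)⁻¹ * (|x| * Real.exp (-((1+c^2)/2) * x^2))) := by
    intro x
    have hsgn : Real.sign x * -x = -|x| := by rw [mul_neg, sign_mul_self']
    have e1 : Real.exp (-(x^2)/2) * Real.exp (-((c*x)^2)/2)
        = Real.exp (-((1+c^2)/2) * x^2) := by
      rw [← Real.exp_add]; congr 1; ring
    have e2 : (Real.sqrt (2*π))⁻¹ * (Real.sqrt (2*π))⁻¹ = (2*π)⁻¹ := by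
      rw [← mul_inv, Real.mul_self_sqrt (by positivity)]
    rw [pdf_even (c*x), pdf_eq, pdf_eq]
    rw [show ((Real.sqrt (2*π))⁻¹ * Real.exp (-(x^2)/2)) *
        (Real.sign x * (((Real.sqrt (2*π))⁻¹ * Real.exp (-((c*x)^2)/2)) * -x))
        = (Real.sign x * -x) * (((Real.sqrt (2*π))⁻¹ * (Real.sqrt (2*π))⁻¹) *
          (Real.exp (-(x^2)/2) * Real.exp (-((c*x)^2)/2))) from by ring]
    rw [hsgn, e1, e2]
    ring
  simp_rw [hpt]
  rw [integral_neg, integral_const_mul, integral_abs_exp (by positivity)]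
  have hne : (1:ℝ) + c^2 ≠ 0 := by positivity
  have hpi : π ≠ 0 := Real.pi_ne_zero
  field_simp

private lemma K_hasDeriv (c : ℝ) :
    HasDerivAt (fun c => ∫ x, Real.sign x * gcdf (-(c * x)) ∂(gaussianReal 0 1))
      (-((1/π) * (1 + c^2)⁻¹)) c := by
  have hF'meas : ∀ c' : ℝ, AEStronglyMeasurable
      (fun x => Real.sign x * (gaussianPDFReal 0 1 (-(c'*x)) * -x)) (gaussianReal 0 1) := by
    intro c'
    exact (measurable_sign'.mul
      (((measurable_gaussianPDFReal 0 1).comp ((measurable_const.mul measurable_id).neg)).mul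
        measurable_id.neg)).aestronglyMeasurable
  have h := hasDerivAt_integral_of_dominated_loc_of_deriv_le (μ := gaussianReal 0 1)
    (F := fun c x => Real.sign x * gcdf (-(c*x)))
    (F' := fun c x => Real.sign x * (gaussianPDFReal 0 1 (-(c*x)) * -x))
    (bound := fun x => (Real.sqrt (2*π))⁻¹ * |x|) (x₀ := c) (Metric.ball_mem_nhds c one_pos)
    (Filter.Eventually.of_forall (fun c' => (Fc_integrable c').aestronglyMeasurable))
    (Fc_integrable c) (hF'meas c)
    (Filter.Eventually.of_forall (fun x => by
      intro c' _
      rw [Real.norm_eq_abs, abs_mul, abs_mul, abs_neg]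
      have h1 := abs_sign_le x
      have h2 : |gaussianPDFReal 0 1 (-(c'*x))| ≤ (Real.sqrt (2*π))⁻¹ := by
        rw [abs_of_nonneg (gaussianPDFReal_nonneg 0 1 _)]; exact pdf_le _
      have h3 : (0:ℝ) ≤ |x| := abs_nonneg x
      have h4 : (0:ℝ) ≤ |gaussianPDFReal 0 1 (-(c'*x))| := abs_nonneg _
      have h6 : |gaussianPDFReal 0 1 (-(c'*x))| * |x| ≤ (Real.sqrt (2*π))⁻¹ * |x| :=
        mul_le_mul_of_nonneg_right h2 h3
      calc |Real.sign x| * (|gaussianPDFReal 0 1 (-(c'*x))| * |x|)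
          ≤ 1 * ((Real.sqrt (2*π))⁻¹ * |x|) :=
            mul_le_mul h1 h6 (by positivity) (by norm_num)
        _ = (Real.sqrt (2*π))⁻¹ * |x| := one_mul _))
    (integrable_abs_gauss.const_mul _)
    (Filter.Eventually.of_forall (fun x => by
      intro c' _
      have h1 : HasDerivAt (fun y : ℝ => -(y * x)) (-x) c' := (hasDerivAt_mul_const x).neg
      have h2 := (gcdf_hasDeriv (-(c'*x))).comp c' h1
      have h3 := h2.const_mul (Real.sign x)
      exact h3))
  rcases h with ⟨-, h2⟩
  rwa [Kderiv_integral c] at h2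

private lemma K_eq (c : ℝ) :
    ∫ x, Real.sign x * gcdf (-(c * x)) ∂(gaussianReal 0 1) = -((1/π) * Real.arctan c) := by
  set K : ℝ → ℝ := fun c => ∫ x, Real.sign x * gcdf (-(c*x)) ∂(gaussianReal 0 1) with hKdef
  have hD : ∀ t : ℝ, HasDerivAt (fun c => K c + (1/π) * Real.arctan c) 0 t := by
    intro t
    have h1 := K_hasDeriv t
    have h2 := (Real.hasDerivAt_arctan t).const_mul (1/π)
    have h3 := h1.add h2
    refine h3.congr_deriv ?_
    have hne : (1:ℝ) + t^2 ≠ 0 := by positivity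
    ring
  have hconst := is_const_of_deriv_eq_zero (f := fun c => K c + (1/π) * Real.arctan c)
    (fun t => (hD t).differentiableAt) (fun t => (hD t).deriv) c 0
  have hK0 : K 0 = 0 := by
    have h0 : (fun x => Real.sign x * gcdf (-(0 * x))) = fun x => gcdf 0 * Real.sign x := by
      funext x; rw [zero_mul, neg_zero]; ring
    rw [hKdef]
    simp only [h0]
    rw [integral_const_mul, integral_sign_gauss, mul_zero]
  rw [Real.arctan_zero, hK0] at hconst
  have : K c + (1/π) * Real.arctan c = 0 := by rw [hconst]; ring
  linarith

/-- For jointly Gaussian standard normal `X, Y` with correlation `ρ`, `|ρ| ≤ 1`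
(realized via the representation `(Z₁, ρZ₁ + √(1-ρ²)Z₂)` with `Z₁, Z₂` i.i.d. standard
normal, which is the general centered standard bivariate Gaussian),
`E[sign X · sign Y] = (2/π)·arcsin ρ`. -/
theorem stmt0 {Ω : Type*} [MeasureSpace Ω] [IsProbabilityMeasure (ℙ : Measure Ω)]
    (ρ : ℝ) (hρ : |ρ| ≤ 1) (X Y : Ω → ℝ) (hX : Measurable X) (hY : Measurable Y)
    (hlaw : Measure.map (fun ω => (X ω, Y ω)) ℙ =
      Measure.map (fun z : ℝ × ℝ => (z.1, ρ * z.1 + Real.sqrt (1 - ρ ^ 2) * z.2))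
        ((gaussianReal 0 1).prod (gaussianReal 0 1))) :
    ∫ ω, Real.sign (X ω) * Real.sign (Y ω) = (2 / π) * Real.arcsin ρ := by
  set γ := gaussianReal 0 1 with hγdef
  set s := Real.sqrt (1 - ρ ^ 2) with hsdef
  have hT : Measurable (fun z : ℝ × ℝ => (z.1, ρ * z.1 + s * z.2)) :=
    measurable_fst.prodMk
      ((measurable_const.mul measurable_fst).add (measurable_const.mul measurable_snd))
  have hfmeas : Measurable (fun p : ℝ × ℝ => Real.sign p.1 * Real.sign p.2) :=
    (measurable_sign'.comp measurable_fst).mul (measurable_sign'.comp measurable_snd)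
  have step1 : ∫ ω, Real.sign (X ω) * Real.sign (Y ω)
      = ∫ z : ℝ × ℝ, Real.sign z.1 * Real.sign (ρ * z.1 + s * z.2) ∂(γ.prod γ) := by
    have h1 : ∫ ω, Real.sign (X ω) * Real.sign (Y ω)
        = ∫ p : ℝ × ℝ, Real.sign p.1 * Real.sign p.2 ∂(Measure.map (fun ω => (X ω, Y ω)) ℙ) :=
      (integral_map (hX.prodMk hY).aemeasurable hfmeas.aestronglyMeasurable).symm
    rw [h1, hlaw, integral_map hT.aemeasurable hfmeas.aestronglyMeasurable]
  rcases lt_or_eq_of_le hρ with hlt | heq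
  · -- main case |ρ| < 1
    have habs := abs_lt.mp hlt
    have hρ2 : ρ ^ 2 < 1 := by nlinarith
    have hspos : 0 < s := Real.sqrt_pos.mpr (by linarith)
    have hs2 : s ^ 2 = 1 - ρ ^ 2 := Real.sq_sqrt (by linarith)
    set c := ρ / s with hcdef
    have hI : Integrable (fun z : ℝ × ℝ => Real.sign z.1 * Real.sign (ρ * z.1 + s * z.2))
        (γ.prod γ) := by
      apply Integrable.mono' (integrable_const (1:ℝ))
        ((measurable_sign'.comp measurable_fst).mul
          (measurable_sign'.comp
            ((measurable_const.mul measurable_fst).add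
              (measurable_const.mul measurable_snd)))).aestronglyMeasurable
      filter_upwards with z
      rw [Real.norm_eq_abs, Pi.mul_apply, abs_mul]
      exact mul_le_one₀ (abs_sign_le _) (abs_nonneg _) (abs_sign_le _)
    rw [step1, integral_prod _ hI]
    have hinner : ∀ x : ℝ, (∫ y, Real.sign x * Real.sign (ρ * x + s * y) ∂γ)
        = Real.sign x - 2 * (Real.sign x * gcdf (-(c * x))) := by
      intro x
      rw [integral_const_mul]
      have harg : ∀ y : ℝ, Real.sign (ρ * x + s * y) = Real.sign (c * x + y) := by
        intro y
        have he : ρ * x + s * y = s * (c * x + y) := by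
          rw [mul_add, ← mul_assoc, mul_div_cancel₀ _ hspos.ne']
        rw [he, sign_smul_pos hspos]
      simp_rw [harg]
      rw [inner_sign (c * x)]
      ring
    have houter : (fun x : ℝ => ∫ y, Real.sign x * Real.sign (ρ * x + s * y) ∂γ)
        = fun x => Real.sign x - 2 * (Real.sign x * gcdf (-(c * x))) := funext hinner
    simp only [houter]
    have hsign_int : Integrable (fun x : ℝ => Real.sign x) γ :=
      integrable_bdd_gauss measurable_sign' abs_sign_le
    rw [integral_sub hsign_int ((Fc_integrable c).const_mul 2), integral_const_mul,
      K_eq c, integral_sign_gauss]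
    have harc : Real.arctan c = Real.arcsin ρ := by
      rw [Real.arctan_eq_arcsin]
      congr 1
      have hne : (1:ℝ) - ρ ^ 2 ≠ 0 := by linarith
      have h1 : 1 + c ^ 2 = (s⁻¹) ^ 2 := by
        rw [hcdef, div_pow, hs2, inv_pow, hs2]
        field_simp
        ring
      rw [h1, Real.sqrt_sq (by positivity), hcdef]
      field_simp
    rw [harc]
    ring
  · -- edge case |ρ| = 1
    have hρ2 : ρ ^ 2 = 1 := by
      have := sq_abs ρ
      rw [heq] at this
      linarith [this]
    have hs0 : s = 0 := by rw [hsdef, show (1:ℝ) - ρ ^ 2 = 0 by linarith, Real.sqrt_zero]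
    have hnull : (γ.prod γ) {z : ℝ × ℝ | z.1 = 0} = 0 := by
      have hset : {z : ℝ × ℝ | z.1 = 0} = ({0} : Set ℝ) ×ˢ (univ : Set ℝ) := by
        ext z
        simp only [Set.mem_setOf_eq, Set.mem_prod, Set.mem_singleton_iff, Set.mem_univ, and_true]
      rw [hset, Measure.prod_prod]
      have h0 : γ {0} = 0 :=
        gaussianReal_absolutelyContinuous 0 one_ne_zero (measure_singleton 0)
      rw [h0, zero_mul]
    have hval : ∀ z : ℝ × ℝ, z.1 ≠ 0 →
        Real.sign z.1 * Real.sign (ρ * z.1 + s * z.2) = ρ := by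
      intro z hz
      rw [hs0, zero_mul, add_zero]
      rcases (abs_eq (by norm_num : (0:ℝ) ≤ 1)).mp heq with h1 | h1
      · subst h1
        rw [one_mul]
        rcases Real.sign_apply_eq_of_ne_zero z.1 hz with h | h <;> rw [h] <;> norm_num
      · subst h1
        rw [show (-1 : ℝ) * z.1 = -z.1 by ring, Real.sign_neg]
        rcases Real.sign_apply_eq_of_ne_zero z.1 hz with h | h <;> rw [h] <;> norm_num
    have hae : (fun z : ℝ × ℝ => Real.sign z.1 * Real.sign (ρ * z.1 + s * z.2))
        =ᵐ[γ.prod γ] (fun _ => ρ) := by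
      have hsub : {z : ℝ × ℝ | ¬ (Real.sign z.1 * Real.sign (ρ * z.1 + s * z.2) = ρ)}
          ⊆ {z : ℝ × ℝ | z.1 = 0} := by
        intro z hz
        by_contra h
        exact hz (hval z h)
      exact ae_iff.mpr (measure_mono_null hsub hnull)
    rw [step1, integral_congr_ae hae, integral_const]
    simp only [measureReal_def, measure_univ, ENNReal.toReal_one, one_smul]
    rcases (abs_eq (by norm_num : (0:ℝ) ≤ 1)).mp heq with h1 | h1 <;> subst h1
    · rw [Real.arcsin_one]
      field_simp
    · rw [Real.arcsin_neg_one]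
      field_simp
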